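/- For all MiniJl types τ1 and τ2, declarative subtyping τ1 ≤d τ2 holds if and only if ⟦τ1⟧ ⊆ ⟦τ2⟧, where ⟦·⟧ is the tag interpretation of types as sets of value types. -/
import Mathlib


/-- MiniJl types -/
inductive Ty : Type
  | pair : Ty → Ty → Ty
  | union : Ty → Ty → Ty
  | int : Ty
  | flt : Ty
  | cmplx : Ty
  | str : Ty
  | real : Ty
  | num : Ty
deriving DecidableEq

/-- Value types: concrete nominal types and pairs of value types. -/
inductive ValTy : Ty → Prop
  | int : ValTy .int
  | flt : ValTy .flt
  | cmplx : ValTy .cmplx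
  | str : ValTy .str
  | pair {v1 v2 : Ty} : ValTy v1 → ValTy v2 → ValTy (.pair v1 v2)

/-- Matching relation `v ⋖ τ`. -/
inductive Matches : Ty → Ty → Prop
  | int : Matches .int .int
  | flt : Matches .flt .flt
  | cmplx : Matches .cmplx .cmplx
  | str : Matches .str .str
  | intReal : Matches .int .real
  | fltReal : Matches .flt .real
  | intNum : Matches .int .num
  | fltNum : Matches .flt .num
  | cmplxNum : Matches .cmplx .num
  | pair {v1 v2 t1 t2 : Ty} : Matches v1 t1 → Matches v2 t2 →
      Matches (.pair v1 v2) (.pair t1 t2)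
  | unionL {v t1 t2 : Ty} : Matches v t1 → Matches v (.union t1 t2)
  | unionR {v t1 t2 : Ty} : Matches v t2 → Matches v (.union t1 t2)

/-- Matching-based semantic subtyping. -/
def SemSub (t1 t2 : Ty) : Prop :=
  ∀ v : Ty, ValTy v → Matches v t1 → Matches v t2

/-- Tag interpretation of types as sets of value types. -/
def interp : Ty → Set Ty
  | .int => {.int}
  | .flt => {.flt}
  | .cmplx => {.cmplx}
  | .str => {.str}
  | .real => {.int, .flt}
  | .num => {.int, .flt, .cmplx}
  | .pair t1 t2 => {v | ∃ v1 ∈ interp t1, ∃ v2 ∈ interp t2, v = .pair v1 v2}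
  | .union t1 t2 => interp t1 ∪ interp t2

/-- Declarative subtyping. -/
inductive DeclSub : Ty → Ty → Prop
  | refl (t : Ty) : DeclSub t t
  | trans {t1 t2 t3 : Ty} : DeclSub t1 t2 → DeclSub t2 t3 → DeclSub t1 t3
  | intReal : DeclSub .int .real
  | fltReal : DeclSub .flt .real
  | realNum : DeclSub .real .num
  | cmplxNum : DeclSub .cmplx .num
  | realUnion : DeclSub .real (.union .int .flt)
  | numUnion : DeclSub .num (.union .real .cmplx)
  | pair {t1 t2 t1' t2' : Ty} : DeclSub t1 t1' → DeclSub t2 t2' →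
      DeclSub (.pair t1 t2) (.pair t1' t2')
  | unionL {t1 t2 t' : Ty} : DeclSub t1 t' → DeclSub t2 t' →
      DeclSub (.union t1 t2) t'
  | unionR1 (t1 t2 : Ty) : DeclSub t1 (.union t1 t2)
  | unionR2 (t1 t2 : Ty) : DeclSub t2 (.union t1 t2)
  | distr1 (t11 t12 t2 : Ty) :
      DeclSub (.pair (.union t11 t12) t2)
        (.union (.pair t11 t2) (.pair t12 t2))
  | distr2 (t1 t21 t22 : Ty) :
      DeclSub (.pair t1 (.union t21 t22))
        (.union (.pair t1 t21) (.pair t1 t22))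

/-- Normal form predicate. -/
inductive InNF : Ty → Prop
  | val {v : Ty} : ValTy v → InNF v
  | union {t1 t2 : Ty} : InNF t1 → InNF t2 → InNF (.union t1 t2)

/-- Union of pairs -/
def unprs : Ty → Ty → Ty
  | .union t11 t12, t2 => .union (unprs t11 t2) (unprs t12 t2)
  | t1, .union t21 t22 => .union (unprs t1 t21) (unprs t1 t22)
  | t1, t2 => .pair t1 t2

/-- Normalization function. -/
def NF : Ty → Ty
  | .int => .int
  | .flt => .flt
  | .cmplx => .cmplx
  | .str => .str
  | .real => .union .int .flt
  | .num => .union (.union .int .flt) .cmplx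
  | .pair t1 t2 => unprs (NF t1) (NF t2)
  | .union t1 t2 => .union (NF t1) (NF t2)

/-- Reductive subtyping. -/
inductive RedSub : Ty → Ty → Prop
  | intRefl : RedSub .int .int
  | fltRefl : RedSub .flt .flt
  | cmplxRefl : RedSub .cmplx .cmplx
  | strRefl : RedSub .str .str
  | intReal : RedSub .int .real
  | fltReal : RedSub .flt .real
  | cmplxNum : RedSub .cmplx .num
  | intNum : RedSub .int .num
  | fltNum : RedSub .flt .num
  | pair {t1 t2 t1' t2' : Ty} : RedSub t1 t1' → RedSub t2 t2' →
      RedSub (.pair t1 t2) (.pair t1' t2')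
  | unionL {t1 t2 t' : Ty} : RedSub t1 t' → RedSub t2 t' →
      RedSub (.union t1 t2) t'
  | unionR1 {t t1' t2' : Ty} : RedSub t t1' → RedSub t (.union t1' t2')
  | unionR2 {t t1' t2' : Ty} : RedSub t t2' → RedSub t (.union t1' t2')
  | nf {t t' : Ty} : RedSub (NF t) t' → RedSub t t'

section Aux

lemma sound_interp {a b : Ty} (h : DeclSub a b) : interp a ⊆ interp b := by
  induction h with
  | refl t => exact le_refl _
  | trans h1 h2 ih1 ih2 => exact ih1.trans ih2
  | intReal => intro v hv; simp [interp] at *; tauto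
  | fltReal => intro v hv; simp [interp] at *; tauto
  | realNum => intro v hv; simp [interp] at *; tauto
  | cmplxNum => intro v hv; simp [interp] at *; tauto
  | realUnion => intro v hv; simp [interp] at *; tauto
  | numUnion => intro v hv; simp [interp] at *; tauto
  | pair h1 h2 ih1 ih2 =>
      rintro v ⟨v1, hv1, v2, hv2, rfl⟩
      exact ⟨v1, ih1 hv1, v2, ih2 hv2, rfl⟩
  | unionL h1 h2 ih1 ih2 => exact Set.union_subset ih1 ih2
  | unionR1 t1 t2 => exact Set.subset_union_left
  | unionR2 t1 t2 => exact Set.subset_union_right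
  | distr1 t11 t12 t2 =>
      rintro v ⟨v1, hv1, v2, hv2, rfl⟩
      cases hv1 with
      | inl h => exact Or.inl ⟨v1, h, v2, hv2, rfl⟩
      | inr h => exact Or.inr ⟨v1, h, v2, hv2, rfl⟩
  | distr2 t1 t21 t22 =>
      rintro v ⟨v1, hv1, v2, hv2, rfl⟩
      cases hv2 with
      | inl h => exact Or.inl ⟨v1, hv1, v2, h, rfl⟩
      | inr h => exact Or.inr ⟨v1, hv1, v2, h, rfl⟩

lemma valty_mem_interp {v : Ty} (h : ValTy v) : v ∈ interp v := by
  induction h with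
  | int => simp [interp]
  | flt => simp [interp]
  | cmplx => simp [interp]
  | str => simp [interp]
  | pair h1 h2 ih1 ih2 => exact ⟨_, ih1, _, ih2, rfl⟩

lemma mem_interp_declSub : ∀ (t v : Ty), v ∈ interp t → DeclSub v t := by
  intro t
  induction t with
  | int => intro v hv; simp [interp] at hv; subst hv; exact .refl _
  | flt => intro v hv; simp [interp] at hv; subst hv; exact .refl _
  | cmplx => intro v hv; simp [interp] at hv; subst hv; exact .refl _
  | str => intro v hv; simp [interp] at hv; subst hv; exact .refl _
  | real =>
      intro v hv; simp [interp] at hv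
      rcases hv with rfl | rfl
      · exact .intReal
      · exact .fltReal
  | num =>
      intro v hv; simp [interp] at hv
      rcases hv with rfl | rfl | rfl
      · exact .trans .intReal .realNum
      · exact .trans .fltReal .realNum
      · exact .cmplxNum
  | pair t1 t2 ih1 ih2 =>
      rintro v ⟨v1, hv1, v2, hv2, rfl⟩
      exact .pair (ih1 _ hv1) (ih2 _ hv2)
  | union t1 t2 ih1 ih2 =>
      intro v hv
      cases hv with
      | inl h => exact (ih1 _ h).trans (.unionR1 _ _)
      | inr h => exact (ih2 _ h).trans (.unionR2 _ _)

lemma unprs_union_left (a1 a2 b : Ty) :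
    unprs (.union a1 a2) b = .union (unprs a1 b) (unprs a2 b) := by
  simp [unprs]

lemma unprs_union_right {a : Ty} (h : ∀ x y, a ≠ Ty.union x y) (b1 b2 : Ty) :
    unprs a (.union b1 b2) = .union (unprs a b1) (unprs a b2) := by
  cases a <;> first | exact (h _ _ rfl).elim | simp [unprs]

lemma unprs_pair_eq {a b : Ty} (ha : ∀ x y, a ≠ Ty.union x y)
    (hb : ∀ x y, b ≠ Ty.union x y) : unprs a b = .pair a b := by
  cases a <;> cases b <;>
    first
      | exact (ha _ _ rfl).elim
      | exact (hb _ _ rfl).elim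
      | simp [unprs]

lemma valty_ne_union {a : Ty} (h : ValTy a) : ∀ x y, a ≠ Ty.union x y := by
  cases h <;> intro x y hxy <;> cases hxy

lemma unprs_le (a b : Ty) : DeclSub (unprs a b) (.pair a b) := by
  induction a generalizing b with
  | union a1 a2 ih1 ih2 =>
      rw [unprs_union_left]
      exact .unionL ((ih1 b).trans (.pair (.unionR1 _ _) (.refl _)))
                    ((ih2 b).trans (.pair (.unionR2 _ _) (.refl _)))
  | _ =>
      induction b <;>
        first
          | (rw [unprs_pair_eq (fun _ _ h => Ty.noConfusion h)
                (fun _ _ h => Ty.noConfusion h)]; exact DeclSub.refl _)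
          | (rename_i jh1 jh2
             rw [unprs_union_right (fun _ _ h => Ty.noConfusion h)]
             exact DeclSub.unionL
               (jh1.trans (.pair (.refl _) (.unionR1 _ _)))
               (jh2.trans (.pair (.refl _) (.unionR2 _ _))))

lemma le_unprs (a b : Ty) : DeclSub (.pair a b) (unprs a b) := by
  induction a generalizing b with
  | union a1 a2 ih1 ih2 =>
      rw [unprs_union_left]
      exact (DeclSub.distr1 _ _ _).trans
        (.unionL ((ih1 b).trans (.unionR1 _ _)) ((ih2 b).trans (.unionR2 _ _)))
  | _ =>
      induction b <;>
        first
          | (rw [unprs_pair_eq (fun _ _ h => Ty.noConfusion h)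
                (fun _ _ h => Ty.noConfusion h)]; exact DeclSub.refl _)
          | (rename_i jh1 jh2
             rw [unprs_union_right (fun _ _ h => Ty.noConfusion h)]
             exact (DeclSub.distr2 _ _ _).trans
               (.unionL (jh1.trans (.unionR1 _ _)) (jh2.trans (.unionR2 _ _))))

lemma unprs_inNF {a b : Ty} (ha : InNF a) (hb : InNF b) : InNF (unprs a b) := by
  induction ha generalizing b with
  | union h1 h2 ih1 ih2 =>
      rw [unprs_union_left]
      exact .union (ih1 hb) (ih2 hb)
  | val hv =>
      induction hb with
      | union h1 h2 ih1 ih2 =>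
          rw [unprs_union_right (valty_ne_union hv)]
          exact .union ih1 ih2
      | val hv' =>
          rw [unprs_pair_eq (valty_ne_union hv) (valty_ne_union hv')]
          exact .val (.pair hv hv')

lemma nf_inNF (t : Ty) : InNF (NF t) := by
  induction t with
  | int => exact .val .int
  | flt => exact .val .flt
  | cmplx => exact .val .cmplx
  | str => exact .val .str
  | real => exact .union (.val .int) (.val .flt)
  | num => exact .union (.union (.val .int) (.val .flt)) (.val .cmplx)
  | pair t1 t2 ih1 ih2 => exact unprs_inNF ih1 ih2
  | union t1 t2 ih1 ih2 => exact .union ih1 ih2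

lemma nf_le (t : Ty) : DeclSub (NF t) t := by
  induction t with
  | int => exact .refl _
  | flt => exact .refl _
  | cmplx => exact .refl _
  | str => exact .refl _
  | real => exact .unionL .intReal .fltReal
  | num =>
      exact .unionL (.unionL (.trans .intReal .realNum) (.trans .fltReal .realNum)) .cmplxNum
  | pair t1 t2 ih1 ih2 => exact (unprs_le _ _).trans (.pair ih1 ih2)
  | union t1 t2 ih1 ih2 =>
      exact .unionL (ih1.trans (.unionR1 _ _)) (ih2.trans (.unionR2 _ _))

lemma le_nf (t : Ty) : DeclSub t (NF t) := by
  induction t with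
  | int => exact .refl _
  | flt => exact .refl _
  | cmplx => exact .refl _
  | str => exact .refl _
  | real => exact .realUnion
  | num =>
      exact DeclSub.numUnion.trans
        (.unionL (DeclSub.realUnion.trans (.unionR1 _ _)) (.unionR2 _ _))
  | pair t1 t2 ih1 ih2 => exact (DeclSub.pair ih1 ih2).trans (le_unprs _ _)
  | union t1 t2 ih1 ih2 =>
      exact .unionL (ih1.trans (.unionR1 _ _)) (ih2.trans (.unionR2 _ _))

lemma nf_complete {s t : Ty} (hs : InNF s) (h : interp s ⊆ interp t) :
    DeclSub s t := by
  induction hs with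
  | val hv => exact mem_interp_declSub t _ (h (valty_mem_interp hv))
  | union h1 h2 ih1 ih2 =>
      exact .unionL (ih1 fun v hv => h (Or.inl hv)) (ih2 fun v hv => h (Or.inr hv))

end Aux

theorem declSub_iff_interp_subset (t1 t2 : Ty) :
    DeclSub t1 t2 ↔ interp t1 ⊆ interp t2 := by
  constructor
  · exact sound_interp
  · intro h
    exact (le_nf t1).trans (nf_complete (nf_inNF t1) ((sound_interp (nf_le t1)).trans h))
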